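/- For all k ∈ ℕ and x ∈ ℝ: (−1)^k · exp(x²/2) · (d^k/dx^k) exp(−x²/2) = 2^{−k/2} · H_k(x/√2), where H_k is the k-th (physicists') Hermite polynomial defined by H_0(x) = 1, H_1(x) = 2x, and H_{k+1}(x) = 2x·H_k(x) − 2k·H_{k−1}(x). -/

import Mathlib

open Real

/-- The physicists' Hermite polynomials, as real functions:
`H 0 = 1`, `H 1 x = 2 x`, `H (k+2) x = 2 x * H (k+1) x - 2 (k+1) * H k x`. -/
noncomputable def physHermite : ℕ → ℝ → ℝ
  | 0 => fun _ => 1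
  | 1 => fun x => 2 * x
  | (k + 2) => fun x => 2 * x * physHermite (k + 1) x - 2 * (k + 1) * physHermite k x

/-! Mathlib's probabilists' Hermite polynomials `hermite n` already give the derivatives of the
Gaussian: `(-1)^n exp(x²/2) (d/dx)^n exp(-x²/2) = He_n(x)`. From the Appell property
`He'_{n+1} = (n+1) He_n` they satisfy `He_{n+2} = X He_{n+1} - (n+1) He_n`, and the substitution
`H_n(x) = 2^{n/2} He_n(√2 x)` turns this into the recurrence defining the physicists' `H_n`. -/

namespace Polynomial

theorem derivative_hermite_succ (n : ℕ) :
    derivative (hermite (n + 1)) = (n + 1 : ℤ[X]) * hermite n := by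
  induction n with
  | zero => simp
  | succ n ih =>
    rw [hermite_succ (n + 1), derivative_sub, derivative_mul, ih, derivative_mul, derivative_X,
      hermite_succ n, derivative_add, derivative_natCast, derivative_one]
    push_cast
    ring

theorem hermite_succ_succ (n : ℕ) :
    hermite (n + 2) = X * hermite (n + 1) - (n + 1 : ℤ[X]) * hermite n := by
  rw [hermite_succ (n + 1), derivative_hermite_succ]

end Polynomial

open Polynomial

theorem physHermite_eq_sqrt_two_pow_mul_aeval_hermite (n : ℕ) (x : ℝ) :
    physHermite n x = √2 ^ n * aeval (√2 * x) (hermite n) := by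
  induction n using Nat.twoStepInduction with
  | zero => simp [physHermite]
  | one => simp [physHermite, ← mul_assoc]
  | more n ih₀ ih₁ =>
    have h2 : √2 ^ 2 = 2 := by simp
    simp only [physHermite, ih₀, ih₁, hermite_succ_succ, map_sub, map_mul, aeval_X, map_add,
      map_natCast, map_one]
    linear_combination -(aeval (√2 * x) (hermite (n + 1)) * x * √2 ^ (n + 1)
      - (n + 1) * √2 ^ n * aeval (√2 * x) (hermite n)) * h2

/-- Rodrigues-type formula relating derivatives of the Gaussian to the
physicists' Hermite polynomials:
`(-1)^k · exp(x²/2) · (d^k/dx^k) exp(-x²/2) = 2^(-k/2) · H_k(x/√2)`. -/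
theorem gaussian_iteratedDeriv_eq_physHermite (k : ℕ) (x : ℝ) :
    (-1 : ℝ) ^ k * Real.exp (x ^ 2 / 2) *
        iteratedDeriv k (fun y : ℝ => Real.exp (-(y ^ 2) / 2)) x =
      (2 : ℝ) ^ (-(k : ℝ) / 2) * physHermite k (x / Real.sqrt 2) := by
  have hsq : √2 ^ k * (2 : ℝ) ^ (-(k : ℝ) / 2) = 1 := by
    rw [sqrt_eq_rpow, ← rpow_natCast, ← rpow_mul (by norm_num), ← rpow_add (by norm_num)]
    convert rpow_zero (2 : ℝ) using 2
    ring
  rw [physHermite_eq_sqrt_two_pow_mul_aeval_hermite, mul_div_cancel₀ _ (by positivity),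
    ← mul_assoc, mul_comm _ (√2 ^ k), hsq, one_mul, hermite_eq_deriv_gaussian',
    iteratedDeriv_eq_iterate]
  simp only [neg_div]
  ring
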